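/- arXiv:2201.06283 — 6 statements merged into one kernel-verified Lean document; each statement's English description precedes it below -/
import Mathlib

section
/- Let p be a prime number and let 𝔪 be the ideal of ℤ[X] generated by the constant polynomial p and by 1 − X. If x, y ∈ ℤ[X] and n, m are natural numbers such that x ∈ 𝔪^n, x ∉ 𝔪^{n+1}, y ∈ 𝔪^m and y ∉ 𝔪^{m+1}, then x·y ∈ 𝔪^{n+m} and x·y ∉ 𝔪^{n+m+1}. (This is the multiplicativity of the 𝔪-adic absolute value |x|_𝔪 = p^{−n}.) -/
/-!
The substitution `X ↦ 1 - pX` turns `𝔪`-adic order into `p`-adic order: after `X ↦ 1 - X`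
the ideal becomes `(p, X)`, and `f ∈ (p, X)^k` iff `p^(k-i)` divides the `i`-th coefficient
of `f` for all `i`, iff `p^k` divides `f(pX)`. Since `p` is prime in `ℤ[X]` (Gauss's lemma),
`p`-adic order is additive on products, hence so is `𝔪`-adic order.
-/

open Polynomial

namespace Polynomial

variable {R : Type*} [CommRing R]

lemma C_pow_mul_X_pow_mem_span_pow (a : R) (j i : ℕ) :
    C a ^ j * X ^ i ∈ Ideal.span {C a, X} ^ (j + i) := by
  rw [pow_add]
  exact Ideal.mul_mem_mul (Ideal.pow_mem_pow (Ideal.subset_span (by simp)) j)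
    (Ideal.pow_mem_pow (Ideal.subset_span (by simp)) i)

lemma C_pow_dvd_comp_C_mul_X_of_mem_span_pow {a : R} {k : ℕ} {f : R[X]}
    (hf : f ∈ Ideal.span {C a, X} ^ k) : C a ^ k ∣ f.comp (C a * X) := by
  have hmap : (Ideal.span {C a, X}).map (compRingHom (C a * X)) ≤ Ideal.span {C a} := by
    rw [Ideal.map_span, Ideal.span_le]
    rintro _ ⟨g, hg, rfl⟩
    rcases hg with rfl | rfl <;> simp [compRingHom, Ideal.mem_span_singleton]
  have hf' := Ideal.mem_map_of_mem (compRingHom (C a * X)) hf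
  rw [Ideal.map_pow] at hf'
  rw [← Ideal.mem_span_singleton, ← Ideal.span_singleton_pow]
  exact Ideal.pow_right_mono hmap k hf'

lemma mem_span_pow_of_C_pow_dvd_comp_C_mul_X [IsDomain R] {a : R} (ha : a ≠ 0) {k : ℕ}
    {f : R[X]} (hf : C a ^ k ∣ f.comp (C a * X)) : f ∈ Ideal.span {C a, X} ^ k := by
  rw [← C_pow, C_dvd_iff_dvd_coeff] at hf
  rw [f.as_sum_range_C_mul_X_pow]
  refine Ideal.sum_mem _ fun i _ => ?_
  rcases le_total i k with hik | hki
  · obtain ⟨d, hd⟩ : a ^ (k - i) ∣ f.coeff i := by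
      rw [← mul_dvd_mul_iff_right (pow_ne_zero i ha), ← pow_add, Nat.sub_add_cancel hik]
      simpa using hf i
    have hmem := Ideal.mul_mem_left _ (C d) (C_pow_mul_X_pow_mem_span_pow a (k - i) i)
    rw [Nat.sub_add_cancel hik] at hmem
    simpa [hd, mul_assoc, mul_comm, mul_left_comm] using hmem
  · exact Ideal.mul_mem_left _ _
      (Ideal.pow_le_pow_right hki (by simpa using C_pow_mul_X_pow_mem_span_pow a 0 i))

theorem mem_span_C_X_pow_iff [IsDomain R] {a : R} (ha : a ≠ 0) (k : ℕ) (f : R[X]) :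
    f ∈ Ideal.span {C a, X} ^ k ↔ C a ^ k ∣ f.comp (C a * X) :=
  ⟨C_pow_dvd_comp_C_mul_X_of_mem_span_pow, mem_span_pow_of_C_pow_dvd_comp_C_mul_X ha⟩

theorem mem_span_C_one_sub_X_pow_iff [IsDomain R] {a : R} (ha : a ≠ 0) (k : ℕ) (f : R[X]) :
    f ∈ Ideal.span {C a, 1 - X} ^ k ↔ C a ^ k ∣ f.comp (1 - C a * X) := by
  let σ : R[X] ≃+* R[X] :=
    (algEquivOfCompEqX (1 - X) (1 - X) (by simp) (by simp)).toRingEquiv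
  have hσ (g : R[X]) : σ g = g.comp (1 - X) := comp_eq_aeval.symm
  have hmap : (Ideal.span {C a, 1 - X}).map σ = Ideal.span {C a, X} := by
    rw [Ideal.map_span, Set.image_insert_eq, Set.image_singleton, hσ, hσ]
    simp
  rw [← Ideal.apply_mem_of_equiv_iff (f := σ), Ideal.map_pow, hmap, mem_span_C_X_pow_iff ha,
    hσ, comp_assoc]
  simp

end Polynomial

/-- Multiplicativity of the 𝔪-adic absolute value on ℤ[X], where
𝔪 = (p, 1 - X): if x ∈ 𝔪^n ∖ 𝔪^{n+1} and y ∈ 𝔪^m ∖ 𝔪^{m+1}, then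
x·y ∈ 𝔪^{n+m} ∖ 𝔪^{n+m+1}. -/
theorem madic_abs_multiplicative (p : ℕ) (hp : p.Prime)
    (𝔪 : Ideal (Polynomial ℤ))
    (h𝔪 : 𝔪 = Ideal.span {Polynomial.C (p : ℤ), 1 - Polynomial.X})
    (x y : Polynomial ℤ) (n m : ℕ)
    (hx : x ∈ 𝔪 ^ n) (hx' : x ∉ 𝔪 ^ (n + 1))
    (hy : y ∈ 𝔪 ^ m) (hy' : y ∉ 𝔪 ^ (m + 1)) :
    x * y ∈ 𝔪 ^ (n + m) ∧ x * y ∉ 𝔪 ^ (n + m + 1) := by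
  let ψ : ℤ[X] →+* ℤ[X] := compRingHom (1 - C (p : ℤ) * X)
  have hmem (z : ℤ[X]) (k : ℕ) : z ∈ 𝔪 ^ k ↔ C (p : ℤ) ^ k ∣ ψ z :=
    h𝔪 ▸ mem_span_C_one_sub_X_pow_iff (by exact_mod_cast hp.ne_zero) k z
  have hord {z : ℤ[X]} {k : ℕ} (hz : z ∈ 𝔪 ^ k) (hz' : z ∉ 𝔪 ^ (k + 1)) :
      emultiplicity (C (p : ℤ)) (ψ z) = k :=
    emultiplicity_eq_coe.mpr ⟨(hmem z k).mp hz, mt (hmem z (k + 1)).mpr hz'⟩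
  have hprime : Prime (C (p : ℤ)) := prime_C_iff.mpr (Nat.prime_iff_prime_int.mp hp)
  have hxy : emultiplicity (C (p : ℤ)) (ψ (x * y)) = ↑(n + m) := by
    rw [map_mul, emultiplicity_mul hprime, hord hx hx', hord hy hy', Nat.cast_add]
  exact ⟨pow_add 𝔪 n m ▸ Ideal.mul_mem_mul hx hy,
    mt (hmem (x * y) (n + m + 1)).mp (emultiplicity_eq_coe.mp hxy).2⟩
end

section
/- Let p be a prime number, let 𝔪 be the ideal of ℤ[X] generated by p and 1 − X, and let n be a positive integer. If a_0, a_1, …, a_n ∈ ℤ[X] are polynomials such that the element x = Σ_{i=0}^{n} a_i · p^{n−i} · (1 − X)^i belongs to 𝔪^{n+1}, then a_i ∈ 𝔪 for every i ∈ {0, 1, …, n}. -/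
open Polynomial

private lemma mem_m_of_dvd_eval (p : ℕ) (f : Polynomial ℤ)
    (h : (p : ℤ) ∣ f.eval 1) :
    f ∈ Ideal.span {Polynomial.C (p : ℤ), 1 - Polynomial.X} := by
  obtain ⟨m, hm⟩ := h
  obtain ⟨q, hq⟩ : (X - C (1:ℤ)) ∣ (f - C (f.eval 1)) :=
    Polynomial.X_sub_C_dvd_sub_C_eval
  have hf : f = C (p : ℤ) * C m + (-(1 - X)) * q := by
    rw [← C_mul, ← hm]
    rw [Polynomial.C_1] at hq
    linear_combination hq
  rw [hf]
  apply add_mem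
  · exact Ideal.mul_mem_right _ _ (Ideal.subset_span (by simp))
  · exact Ideal.mul_mem_right _ _ (neg_mem (Ideal.subset_span (by simp)))

/-- If x = Σ_{i=0}^{n} a_i · p^{n−i} · (1 − X)^i ∈ 𝔪^{n+1}, where n ≥ 1 and
𝔪 = (p, 1 - X) ⊆ ℤ[X], then every a_i belongs to 𝔪. -/
theorem coeffs_mem_of_sum_mem_pow_succ (p : ℕ) (hp : p.Prime)
    (𝔪 : Ideal (Polynomial ℤ))
    (h𝔪 : 𝔪 = Ideal.span {Polynomial.C (p : ℤ), 1 - Polynomial.X})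
    (n : ℕ) (hn : 0 < n) (a : ℕ → Polynomial ℤ)
    (hx : (∑ i ∈ Finset.range (n + 1),
        a i * Polynomial.C (p : ℤ) ^ (n - i) * (1 - Polynomial.X) ^ i) ∈ 𝔪 ^ (n + 1)) :
    ∀ i ≤ n, a i ∈ 𝔪 := by
  set φ : Polynomial ℤ →+* Polynomial ℤ :=
    Polynomial.eval₂RingHom Polynomial.C (1 - Polynomial.C (p : ℤ) * Polynomial.X) with hφ
  have hφC : ∀ c : ℤ, φ (C c) = C c := fun c => by simp [hφ]
  have hφX : φ (1 - X) = C (p : ℤ) * X := by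
    rw [map_sub, map_one]
    simp [hφ]
  -- image of 𝔪 is contained in (C p)
  have hmap : Ideal.map φ 𝔪 ≤ Ideal.span {Polynomial.C (p : ℤ)} := by
    rw [h𝔪, Ideal.map_span, Ideal.span_le]
    rintro y ⟨z, hz, rfl⟩
    rcases hz with rfl | rfl
    · rw [hφC]; exact Ideal.subset_span rfl
    · rw [hφX]
      exact Ideal.mul_mem_right _ _ (Ideal.subset_span rfl)
  have hφm : ∀ f ∈ 𝔪, Polynomial.C (p : ℤ) ∣ φ f := by
    intro f hf
    have : φ f ∈ Ideal.span {Polynomial.C (p : ℤ)} :=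
      hmap (Ideal.mem_map_of_mem φ hf)
    exact Ideal.mem_span_singleton.mp this
  -- φ x is divisible by (C p)^(n+1)
  have hx1 : Polynomial.C (p : ℤ) ^ (n + 1) ∣
      φ (∑ i ∈ Finset.range (n + 1),
        a i * Polynomial.C (p : ℤ) ^ (n - i) * (1 - Polynomial.X) ^ i) := by
    have h1 : φ (∑ i ∈ Finset.range (n + 1),
        a i * Polynomial.C (p : ℤ) ^ (n - i) * (1 - Polynomial.X) ^ i)
        ∈ (Ideal.map φ 𝔪) ^ (n + 1) := by
      rw [← Ideal.map_pow]
      exact Ideal.mem_map_of_mem φ hx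
    have h2 : (Ideal.map φ 𝔪) ^ (n + 1) ≤ (Ideal.span {Polynomial.C (p : ℤ)}) ^ (n + 1) :=
      Ideal.pow_right_mono hmap (n + 1)
    have h3 := h2 h1
    rw [Ideal.span_singleton_pow] at h3
    exact Ideal.mem_span_singleton.mp h3
  -- compute φ x
  have hcomp : φ (∑ i ∈ Finset.range (n + 1),
      a i * Polynomial.C (p : ℤ) ^ (n - i) * (1 - Polynomial.X) ^ i)
      = Polynomial.C (p : ℤ) ^ n *
        ∑ i ∈ Finset.range (n + 1), φ (a i) * Polynomial.X ^ i := by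
    rw [map_sum, Finset.mul_sum]
    apply Finset.sum_congr rfl
    intro i hi
    have hin : i ≤ n := Finset.mem_range_succ_iff.mp hi
    have hpow : Polynomial.C (p : ℤ) ^ (n - i) * Polynomial.C (p : ℤ) ^ i
        = Polynomial.C (p : ℤ) ^ n := by
      rw [← pow_add, Nat.sub_add_cancel hin]
    rw [map_mul, map_mul, map_pow, map_pow, hφC, hφX, mul_pow, ← hpow]
    ring
  rw [hcomp] at hx1
  have hCp0 : Polynomial.C (p : ℤ) ^ n ≠ 0 := by
    apply pow_ne_zero
    simp [hp.ne_zero]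
  have hdvd : Polynomial.C (p : ℤ) ∣
      ∑ i ∈ Finset.range (n + 1), φ (a i) * Polynomial.X ^ i := by
    have : Polynomial.C (p : ℤ) ^ n * Polynomial.C (p : ℤ) ∣
        Polynomial.C (p : ℤ) ^ n *
          ∑ i ∈ Finset.range (n + 1), φ (a i) * Polynomial.X ^ i := by
      rw [← pow_succ]; exact hx1
    exact (mul_dvd_mul_iff_left hCp0).mp this
  have hcoeff : ∀ j, (p : ℤ) ∣
      (∑ i ∈ Finset.range (n + 1), φ (a i) * Polynomial.X ^ i).coeff j :=
    (Polynomial.C_dvd_iff_dvd_coeff _ _).mp hdvd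
  -- coeff 0 of φ f is eval 1 of f
  have hcoeff0 : ∀ f : Polynomial ℤ, (φ f).coeff 0 = f.eval 1 := by
    intro f
    have : φ f = f.comp (1 - Polynomial.C (p : ℤ) * Polynomial.X) := rfl
    rw [this, Polynomial.coeff_zero_eq_eval_zero, Polynomial.eval_comp]
    simp
  -- strong induction
  intro i
  induction i using Nat.strong_induction_on with
  | _ i IH =>
    intro hi
    have hterm : (p : ℤ) ∣ (φ (a i) * Polynomial.X ^ i).coeff i := by
      have hsum := hcoeff i
      rw [Polynomial.finset_sum_coeff] at hsum
      have hrest : (p : ℤ) ∣ ∑ j ∈ (Finset.range (n + 1)).erase i,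
          (φ (a j) * Polynomial.X ^ j).coeff i := by
        apply Finset.dvd_sum
        intro j hj
        obtain ⟨hji, hjr⟩ := Finset.mem_erase.mp hj
        rw [Polynomial.coeff_mul_X_pow']
        rcases lt_or_ge i j with h | h
        · rw [if_neg (by omega)]
          exact dvd_zero _
        · rw [if_pos h]
          have hjlt : j < i := lt_of_le_of_ne h (by omega)
          have haj : a j ∈ 𝔪 := IH j hjlt (le_trans (le_of_lt hjlt) hi)
          exact (Polynomial.C_dvd_iff_dvd_coeff _ _).mp (hφm _ haj) _
      have hsplit : (∑ j ∈ Finset.range (n + 1), (φ (a j) * Polynomial.X ^ j).coeff i)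
          = (φ (a i) * Polynomial.X ^ i).coeff i
            + ∑ j ∈ (Finset.range (n + 1)).erase i,
              (φ (a j) * Polynomial.X ^ j).coeff i :=
        (Finset.add_sum_erase _ _ (Finset.mem_range_succ_iff.mpr hi)).symm
      rw [hsplit] at hsum
      exact (dvd_add_right hrest).mp (by rwa [add_comm] at hsum)
    rw [Polynomial.coeff_mul_X_pow', if_pos le_rfl, Nat.sub_self, hcoeff0] at hterm
    rw [h𝔪]
    exact mem_m_of_dvd_eval p (a i) hterm
end

section
/- Let p be a prime number and let 𝔪 be the ideal of ℤ[X] generated by p and 1 − X. Let P, Q ∈ ℤ[X] with Q ∉ 𝔪 and let n be a natural number with P ∈ 𝔪^n. Then Q(1) is not divisible by p (in particular Q(1) ≠ 0), and the p-adic norm of the rational number P(1)/Q(1) satisfies ‖P(1)/Q(1)‖_p ≤ p^{−n}. (This says that evaluation at X = 1 induces a norm-nonincreasing, hence continuous, ring homomorphism from the localization ℤ[X]_𝔪 with the 𝔪-adic norm to ℤ_p.) -/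
open Polynomial

/-- For 𝔪 = (p, 1 - X) ⊆ ℤ[X], P ∈ 𝔪^n and Q ∉ 𝔪: p does not divide Q(1),
and the p-adic norm of P(1)/Q(1) is at most p^{-n}. -/
theorem eval_one_padic_norm_le (p : ℕ) [Fact p.Prime]
    (P Q : Polynomial ℤ) (n : ℕ)
    (hQ : Q ∉ Ideal.span {Polynomial.C (p : ℤ), 1 - Polynomial.X})
    (hP : P ∈ (Ideal.span {Polynomial.C (p : ℤ), 1 - Polynomial.X}) ^ n) :
    ¬ (p : ℤ) ∣ Q.eval 1
      ∧ ‖((P.eval 1 : ℤ) : ℚ_[p]) / ((Q.eval 1 : ℤ) : ℚ_[p])‖ ≤ (p : ℝ) ^ (-(n : ℤ)) := by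
  have hQ1 : ¬ (p : ℤ) ∣ Q.eval 1 := by
    intro ⟨k, hk⟩
    apply hQ
    obtain ⟨d, hd⟩ : X - C (1:ℤ) ∣ Q - C (Q.eval 1) := Q.X_sub_C_dvd_sub_C_eval
    rw [Ideal.mem_span_pair]
    refine ⟨C k, -d, ?_⟩
    have : (-d) * (1 - X) = d * (X - C 1) := by ring_nf; rw [Polynomial.C_1]; ring
    rw [this, mul_comm d, ← hd, hk, ← C_mul]
    ring
  -- p^n divides P.eval 1
  have hPn : (p : ℤ) ^ n ∣ P.eval 1 := by
    have hmap : P.eval 1 ∈ Ideal.map (evalRingHom (1:ℤ))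
        ((Ideal.span {Polynomial.C (p : ℤ), 1 - Polynomial.X}) ^ n) :=
      Ideal.mem_map_of_mem _ hP
    rw [Ideal.map_pow, Ideal.map_span] at hmap
    have himg : (evalRingHom (1:ℤ)) '' {Polynomial.C (p : ℤ), 1 - Polynomial.X}
        = {(p : ℤ), 0} := by
      simp [Set.image_insert_eq]
    rw [himg] at hmap
    have hspan : Ideal.span ({(p : ℤ), 0} : Set ℤ) = Ideal.span {(p : ℤ)} := by
      rw [Ideal.span_insert]
      refine sup_eq_left.mpr ?_
      exact Ideal.span_le.mpr (Set.singleton_subset_iff.mpr (Ideal.span {(p:ℤ)}).zero_mem)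
    rw [hspan, Ideal.span_singleton_pow, Ideal.mem_span_singleton] at hmap
    exact hmap
  refine ⟨hQ1, ?_⟩
  rw [norm_div]
  have hQnorm : ‖((Q.eval 1 : ℤ) : ℚ_[p])‖ = 1 := by
    have hle : ‖((Q.eval 1 : ℤ) : ℚ_[p])‖ ≤ 1 := Padic.norm_int_le_one _
    have hlt : ¬ ‖((Q.eval 1 : ℤ) : ℚ_[p])‖ < 1 := by
      rw [Padic.norm_intCast_lt_one_iff]
      exact_mod_cast hQ1
    linarith [lt_or_eq_of_le hle |>.resolve_left hlt]
  rw [hQnorm, div_one]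
  rw [Padic.norm_int_le_pow_iff_dvd]
  exact_mod_cast hPn
end

section
/- Let p be a prime number and let 𝔪 be the ideal of ℤ[X] generated by p and 1 − X. Let P, Q ∈ ℤ[X] with Q ∉ 𝔪. Then: (a) Q.comp(X^p) ∉ 𝔪, and hence Q^p · Q.comp(X^p) ∉ 𝔪; and (b) P.comp(X^p) · Q^p − P^p · Q.comp(X^p) ∈ 𝔪. (These two facts express that the map P/Q ↦ P(X^p)/Q(X^p) is a well-defined Frobenius endomorphism of the localization ℤ[X]_𝔪.) -/
open Polynomial

lemma mem_m_iff (p : ℕ) (hp : p.Prime) (R : Polynomial ℤ) :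
    R ∈ Ideal.span {Polynomial.C (p : ℤ), 1 - Polynomial.X} ↔
      ((R.eval 1 : ℤ) : ZMod p) = 0 := by
  constructor
  · intro hR
    have : Ideal.span {Polynomial.C (p : ℤ), 1 - Polynomial.X} ≤
        RingHom.ker ((Int.castRingHom (ZMod p)).comp (evalRingHom 1)) := by
      rw [Ideal.span_le]
      rintro x (rfl | rfl)
      · simp [RingHom.mem_ker]
      · simp [RingHom.mem_ker]
    simpa [RingHom.mem_ker] using this hR
  · intro hR
    rw [ZMod.intCast_zmod_eq_zero_iff_dvd] at hR
    have h1 : (1 : Polynomial ℤ) - X ∣ R - C (R.eval 1) := by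
      have : X - C (1 : ℤ) ∣ R - C (R.eval 1) := by
        rw [dvd_iff_isRoot]
        simp [IsRoot]
      have heq : (1 : Polynomial ℤ) - X = -(X - C 1) := by rw [map_one]; ring
      rw [heq]
      exact (neg_dvd).mpr this
    have h2 : C ((p : ℤ)) ∣ C (R.eval 1) := by
      obtain ⟨c, hc⟩ := hR
      exact ⟨C c, by rw [hc, map_mul]⟩
    obtain ⟨a, ha⟩ := h1
    obtain ⟨b, hb⟩ := h2
    have hmem1 : R - C (R.eval 1) ∈ Ideal.span {Polynomial.C (p : ℤ), 1 - Polynomial.X} :=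
      Ideal.mem_span_pair.mpr ⟨0, a, by rw [ha]; ring⟩
    have hmem2 : C (R.eval 1) ∈ Ideal.span {Polynomial.C (p : ℤ), 1 - Polynomial.X} :=
      Ideal.mem_span_pair.mpr ⟨b, 0, by rw [hb]; ring⟩
    have := Ideal.add_mem _ hmem1 hmem2
    simpa using this

/-- For 𝔪 = (p, 1 - X) ⊆ ℤ[X] and Q ∉ 𝔪: (a) Q(X^p) ∉ 𝔪 and
Q^p · Q(X^p) ∉ 𝔪; (b) P(X^p)·Q^p − P^p·Q(X^p) ∈ 𝔪 for every P.
These express that P/Q ↦ P(X^p)/Q(X^p) is a Frobenius endomorphism of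
the localization ℤ[X]_𝔪. -/
theorem frobenius_endomorphism_of_localization (p : ℕ) (hp : p.Prime)
    (𝔪 : Ideal (Polynomial ℤ))
    (h𝔪 : 𝔪 = Ideal.span {Polynomial.C (p : ℤ), 1 - Polynomial.X})
    (P Q : Polynomial ℤ) (hQ : Q ∉ 𝔪) :
    (Q.comp (Polynomial.X ^ p) ∉ 𝔪 ∧ Q ^ p * Q.comp (Polynomial.X ^ p) ∉ 𝔪)
      ∧ P.comp (Polynomial.X ^ p) * Q ^ p - P ^ p * Q.comp (Polynomial.X ^ p) ∈ 𝔪 := by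
  subst h𝔪
  haveI : Fact p.Prime := ⟨hp⟩
  rw [mem_m_iff p hp] at hQ
  have hcompQ : ((Q.comp (X ^ p)).eval 1 : ℤ) = Q.eval 1 := by
    simp [eval_comp]
  refine ⟨⟨?_, ?_⟩, ?_⟩
  · rw [mem_m_iff p hp, hcompQ]; exact hQ
  · rw [mem_m_iff p hp]
    intro h
    rw [eval_mul, eval_pow, hcompQ] at h
    push_cast at h
    rcases mul_eq_zero.mp h with h | h
    · exact hQ (pow_eq_zero_iff hp.ne_zero |>.mp h)
    · exact hQ h
  · rw [mem_m_iff p hp]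
    rw [eval_sub, eval_mul, eval_mul, eval_pow, eval_pow, eval_comp, eval_comp,
      eval_pow, eval_X, one_pow]
    push_cast
    rw [ZMod.pow_card, ZMod.pow_card]
    ring
end

section
/- Let p be a prime number and let 𝔪 be the ideal of ℤ[X] generated by p and 1 − X. Then: (a) the constant polynomial p belongs to 𝔪 but not to 𝔪^2; (b) the polynomial 1 − X belongs to 𝔪 but not to 𝔪^2; and (c) the polynomial 1 − X^p belongs to 𝔪^2 but not to 𝔪^3 (i.e. |p|_𝔪 = |1 − X|_𝔪 = p^{−1} while |1 − X^p|_𝔪 = p^{−2}). -/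
/-!
Substituting `X ↦ X + 1` carries `𝔪 = (p, 1 - X)` into `(p, X)`, and every element of `(p, X)ⁿ`
has its `k`-th coefficient divisible by `p ^ (n - k)`. Reading off the coefficients of `X⁰`, `X¹`
in the Taylor expansions at `1` of `p`, `1 - X` and `1 - X ^ p`, namely `p`, `-1` and `-p`, rules
out membership in the next power of `𝔪`. The memberships hold because `𝔪` consists of the
polynomials whose value at `1` is divisible by `p`, and `1 - X ^ p = (1 + X + ⋯ + X ^ (p - 1)) (1 - X)`.
-/

open Polynomial

namespace Polynomial

section CommSemiring

variable {R : Type*} [CommSemiring R] (a : R)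

theorem pow_sub_dvd_coeff_mul {m n : ℕ} {f g : R[X]} (hf : ∀ k, a ^ (m - k) ∣ f.coeff k)
    (hg : ∀ k, a ^ (n - k) ∣ g.coeff k) (k : ℕ) : a ^ (m + n - k) ∣ (f * g).coeff k := by
  rw [coeff_mul]
  refine Finset.dvd_sum fun ij hij => ?_
  rw [Finset.HasAntidiagonal.mem_antidiagonal] at hij
  calc a ^ (m + n - k) ∣ a ^ (m - ij.1) * a ^ (n - ij.2) := by
        rw [← pow_add]; exact pow_dvd_pow a (by omega)
    _ ∣ f.coeff ij.1 * g.coeff ij.2 := mul_dvd_mul (hf _) (hg _)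

/-- This is `Ideal.span {C a, X} ^ n`. -/
def powDvdCoeffIdeal (n : ℕ) : Ideal R[X] where
  carrier := {f | ∀ k, a ^ (n - k) ∣ f.coeff k}
  zero_mem' _ := by simp
  add_mem' hf hg k := by rw [coeff_add]; exact dvd_add (hf k) (hg k)
  smul_mem' c f hf k := by simpa using pow_sub_dvd_coeff_mul a (m := 0) (fun _ => by simp) hf k

variable {a}

theorem mem_powDvdCoeffIdeal {n : ℕ} {f : R[X]} :
    f ∈ powDvdCoeffIdeal a n ↔ ∀ k, a ^ (n - k) ∣ f.coeff k :=
  Iff.rfl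

theorem pow_le_powDvdCoeffIdeal {J : Ideal R[X]} (hJ : J ≤ powDvdCoeffIdeal a 1) (n : ℕ) :
    J ^ n ≤ powDvdCoeffIdeal a n := by
  induction n with
  | zero => simp [mem_powDvdCoeffIdeal, SetLike.le_def]
  | succ n ih =>
    rw [pow_succ, Ideal.mul_le]
    exact fun f hf g hg => pow_sub_dvd_coeff_mul a (ih hf) (hJ hg)

theorem taylor_mem_powDvdCoeffIdeal_of_mem_pow {r : R} {J : Ideal R[X]}
    (hJ : ∀ f ∈ J, a ∣ f.eval r) {n : ℕ} {f : R[X]} (hf : f ∈ J ^ n) :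
    taylor r f ∈ powDvdCoeffIdeal a n := by
  have hmap : J.map (taylorAlgHom r) ≤ powDvdCoeffIdeal a 1 := by
    refine Ideal.map_le_iff_le_comap.mpr fun g hg k => ?_
    rcases k with _ | k
    · simpa [taylor_coeff_zero] using hJ g hg
    · simp
  have := Ideal.mem_map_of_mem (taylorAlgHom r) hf
  rw [Ideal.map_pow] at this
  exact pow_le_powDvdCoeffIdeal hmap n this

end CommSemiring

theorem mem_span_C_sub_X_iff {R : Type*} [CommRing R] {a r : R} {f : R[X]} :
    f ∈ Ideal.span {C a, C r - X} ↔ a ∣ f.eval r := by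
  constructor
  · intro hf
    obtain ⟨u, v, rfl⟩ := Ideal.mem_span_pair.mp hf
    simp
  · rintro ⟨c, hc⟩
    obtain ⟨q, hq⟩ := X_sub_C_dvd_sub_C_eval (a := r) (p := f)
    refine Ideal.mem_span_pair.mpr ⟨C c, -q, ?_⟩
    rw [hc, C_mul] at hq
    linear_combination -hq

end Polynomial

/-- With 𝔪 = (p, 1 - X) ⊆ ℤ[X]: p and 1 − X lie in 𝔪 ∖ 𝔪², while
1 − X^p lies in 𝔪² ∖ 𝔪³; that is, |p|_𝔪 = |1 − X|_𝔪 = p^{-1} and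
|1 − X^p|_𝔪 = p^{-2}. -/
theorem madic_norms_of_p_one_sub_X_and_one_sub_X_pow_p (p : ℕ) (hp : p.Prime)
    (𝔪 : Ideal (Polynomial ℤ))
    (h𝔪 : 𝔪 = Ideal.span {Polynomial.C (p : ℤ), 1 - Polynomial.X}) :
    ((Polynomial.C (p : ℤ) ∈ 𝔪 ∧ Polynomial.C (p : ℤ) ∉ 𝔪 ^ 2)
      ∧ ((1 - Polynomial.X : Polynomial ℤ) ∈ 𝔪 ∧ (1 - Polynomial.X : Polynomial ℤ) ∉ 𝔪 ^ 2))
      ∧ ((1 - Polynomial.X ^ p : Polynomial ℤ) ∈ 𝔪 ^ 2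
          ∧ (1 - Polynomial.X ^ p : Polynomial ℤ) ∉ 𝔪 ^ 3) := by
  have mem_iff (f : ℤ[X]) : f ∈ 𝔪 ↔ (p : ℤ) ∣ f.eval 1 := by
    rw [h𝔪, ← C_1]; exact mem_span_C_sub_X_iff
  have dvd_taylor_coeff {f : ℤ[X]} {n : ℕ} (hf : f ∈ 𝔪 ^ n) (k : ℕ) :
      (p : ℤ) ^ (n - k) ∣ (taylor 1 f).coeff k :=
    taylor_mem_powDvdCoeffIdeal_of_mem_pow (fun g hg => (mem_iff g).mp hg) hf k
  have hp' : Prime (p : ℤ) := Nat.prime_iff_prime_int.mp hp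
  have not_dvd_one : ¬ (p : ℤ) ∣ 1 := hp'.not_dvd_one
  have not_sq_dvd : ¬ (p : ℤ) ^ 2 ∣ p := fun h =>
    not_dvd_one ((mul_dvd_mul_iff_left hp'.ne_zero).mp (by simpa [sq] using h))
  refine ⟨⟨⟨(mem_iff _).mpr (by simp), fun h => not_sq_dvd ?_⟩,
    (mem_iff _).mpr (by simp), fun h => not_dvd_one ?_⟩, ?_, fun h => not_sq_dvd ?_⟩
  · simpa [taylor_coeff_zero] using dvd_taylor_coeff h 0
  · simpa [taylor_coeff_one] using dvd_taylor_coeff h 1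
  · rw [← geom_sum_mul_neg, sq]
    exact Ideal.mul_mem_mul ((mem_iff _).mpr (by simp)) ((mem_iff _).mpr (by simp))
  · have h' := dvd_taylor_coeff h 1
    rw [taylor_coeff_one] at h'
    simpa [derivative_X_pow] using h'
end

section
/- Let R be a commutative ring and let σ, τ : R → R be ring endomorphisms with σ ∘ τ = τ ∘ σ. Let n be a positive integer and let A, H be n×n matrices over R such that (H.map σ) · (A.map τ) = A · H, where M.map φ denotes applying φ to every entry of the matrix M. If a vector y : Fin n → R satisfies σ(y_i) = (A.mulVec y)_i for every i (i.e. the entrywise image of y under σ equals A·y), then the vector z := H.mulVec (τ ∘ y) (i.e. z = H·(τ(y_1), …, τ(y_n))ᵀ) satisfies σ(z_i) = (A.mulVec z)_i for every i. In other words, y ↦ H·τ(y) maps solutions of the system σX = AX to solutions of the same system. -/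
/-- If σ, τ are commuting ring endomorphisms of R, and H, A are n×n matrices
with (H.map σ)·(A.map τ) = A·H, then y ↦ H·(τ applied entrywise to y) maps
solutions of the system σX = AX to solutions of the same system. -/
theorem frobenius_action_on_solutions (R : Type*) [CommRing R]
    (σ τ : R →+* R) (hcomm : σ.comp τ = τ.comp σ)
    (n : ℕ) (hn : 0 < n)
    (A H : Matrix (Fin n) (Fin n) R)
    (hH : (H.map ⇑σ) * (A.map ⇑τ) = A * H)
    (y : Fin n → R) (hy : ∀ i, σ (y i) = A.mulVec y i) :
    ∀ i, σ (H.mulVec (fun j => τ (y j)) i)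
        = A.mulVec (H.mulVec fun j => τ (y j)) i := by
  intro i
  have hcomm' : ∀ x, σ (τ x) = τ (σ x) := fun x => RingHom.congr_fun hcomm x
  have step1 : σ (H.mulVec (fun j => τ (y j)) i)
      = (H.map ⇑σ).mulVec (fun j => τ (σ (y j))) i := by
    simp only [Matrix.mulVec, dotProduct, Matrix.map_apply, map_sum, map_mul, hcomm']
  rw [step1]
  have step2 : (fun j => τ (σ (y j))) = (A.map ⇑τ).mulVec (fun j => τ (y j)) := by
    funext j
    rw [hy j]
    simp only [Matrix.mulVec, dotProduct, Matrix.map_apply, map_sum, map_mul]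
  rw [step2, Matrix.mulVec_mulVec, hH, ← Matrix.mulVec_mulVec]
end
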